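/- If D is a ∗-Prüfer domain, then ∗ is an arithmetisch brauchbar (a.b.) star operation: for every nonzero finitely generated fractional ideal F and all nonzero fractional ideals A, B, the inclusion (FA)^∗ ⊆ (FB)^∗ implies A^∗ ⊆ B^∗. -/

import Mathlib

open FractionalIdeal

/-- A star operation on an integral domain `D` with fraction field `K`, acting on
fractional ideals: it fixes `D`, is extensive, monotone, idempotent (all on nonzero
ideals), and commutes with multiplication by nonzero principal fractional ideals. -/
structure StarOp (D : Type*) [CommRing D] [IsDomain D] (K : Type*) [Field K]
    [Algebra D K] [IsFractionRing D K] where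
  star : FractionalIdeal (nonZeroDivisors D) K → FractionalIdeal (nonZeroDivisors D) K
  star_one : star 1 = 1
  le_star : ∀ {A}, A ≠ 0 → A ≤ star A
  star_mono : ∀ {A B}, A ≠ 0 → A ≤ B → star A ≤ star B
  star_idem : ∀ {A}, A ≠ 0 → star (star A) = star A
  star_smul : ∀ {A : FractionalIdeal (nonZeroDivisors D) K} (x : K), x ≠ 0 → A ≠ 0 →
    star (spanSingleton (nonZeroDivisors D) x * A) = spanSingleton (nonZeroDivisors D) x * star A

variable {D K : Type*} [CommRing D] [IsDomain D] [Field K] [Algebra D K] [IsFractionRing D K]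

/-! If `(FG)^∗ = D`, then `A ↦ (G (FA)^∗)^∗` recovers `A^∗`, because `∗` absorbs inner stars:
`(C E^∗)^∗ = (CE)^∗`. Multiplying `(FA)^∗ ⊆ (FB)^∗` by `F⁻¹` therefore yields `A^∗ ⊆ B^∗`, and
`∗`-Prüfer supplies `(FF⁻¹)^∗ = D` for finitely generated `F`. -/

namespace FractionalIdeal

variable {R P : Type*} [CommRing R] {S : Submonoid R} [CommRing P] [Algebra R P]
  [NoZeroDivisors P]

instance : NoZeroDivisors (FractionalIdeal S P) where
  eq_zero_or_eq_zero_of_mul_eq_zero {A B} h := by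
    rw [← coeToSubmodule_eq_bot, coe_mul] at h
    simpa only [coeToSubmodule_eq_bot] using Submodule.mul_eq_bot.mp h

end FractionalIdeal

namespace StarOp

variable (s : StarOp D K) {A C E : FractionalIdeal (nonZeroDivisors D) K}

theorem star_ne_zero (hA : A ≠ 0) : s.star A ≠ 0 :=
  fun h => hA (le_antisymm (h ▸ s.le_star hA) (zero_le _))

theorem mul_star_le_star_mul (hE : E ≠ 0) : C * s.star E ≤ s.star (C * E) := by
  rw [mul_le]
  intro c hc e he
  rcases eq_or_ne c 0 with rfl | hc0
  · simpa using (s.star (C * E)).zero_mem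
  · have hcE : spanSingleton _ c * s.star E ≤ s.star (C * E) := by
      rw [← s.star_smul c hc0 hE]
      exact s.star_mono (mul_ne_zero (spanSingleton_ne_zero_iff.mpr hc0) hE)
        (mul_left_mono (spanSingleton_le_iff_mem.mpr hc))
    exact hcE (mul_mem_mul (mem_spanSingleton_self _ c) he)

theorem star_mul_star (hC : C ≠ 0) (hE : E ≠ 0) : s.star (C * s.star E) = s.star (C * E) := by
  have hCE : C * E ≠ 0 := mul_ne_zero hC hE
  refine le_antisymm ?_ (s.star_mono hCE (mul_right_mono (s.le_star hE)))
  calc s.star (C * s.star E) ≤ s.star (s.star (C * E)) :=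
        s.star_mono (mul_ne_zero hC (s.star_ne_zero hE)) (s.mul_star_le_star_mul hE)
    _ = s.star (C * E) := s.star_idem hCE

theorem star_mul_star_mul_cancel {F G : FractionalIdeal (nonZeroDivisors D) K}
    (hFG : s.star (F * G) = 1) (hF : F ≠ 0) (hG : G ≠ 0) (hC : C ≠ 0) :
    s.star (G * s.star (F * C)) = s.star C := by
  rw [s.star_mul_star hG (mul_ne_zero hF hC), mul_left_comm, ← mul_assoc, mul_comm _ C,
    ← s.star_mul_star hC (mul_ne_zero hF hG), hFG, mul_one]

theorem star_le_star_of_star_mul_le {F G A B : FractionalIdeal (nonZeroDivisors D) K}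
    (hFG : s.star (F * G) = 1) (hF : F ≠ 0) (hG : G ≠ 0) (hA : A ≠ 0) (hB : B ≠ 0)
    (h : s.star (F * A) ≤ s.star (F * B)) : s.star A ≤ s.star B :=
  calc s.star A = s.star (G * s.star (F * A)) := (s.star_mul_star_mul_cancel hFG hF hG hA).symm
    _ ≤ s.star (G * s.star (F * B)) :=
        s.star_mono (mul_ne_zero hG (s.star_ne_zero (mul_ne_zero hF hA))) (mul_right_mono h)
    _ = s.star B := s.star_mul_star_mul_cancel hFG hF hG hB

end StarOp

/-- In a `∗`-Prüfer domain, `∗` is an a.b. star operation: for nonzero finitely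
generated `F` and nonzero `A`, `B`, `(FA)^∗ ⊆ (FB)^∗` implies `A^∗ ⊆ B^∗`. -/
theorem starPrufer_ab (s : StarOp D K)
    (hP : ∀ F : FractionalIdeal (nonZeroDivisors D) K, F ≠ 0 → (F : Submodule D K).FG → s.star (F * F⁻¹) = 1) :
    ∀ (F A B : FractionalIdeal (nonZeroDivisors D) K), F ≠ 0 → (F : Submodule D K).FG → A ≠ 0 → B ≠ 0 →
      s.star (F * A) ≤ s.star (F * B) → s.star A ≤ s.star B := by
  intro F A B hF hFfg hA hB h
  have hFinv : F⁻¹ ≠ 0 := right_ne_zero_of_mul (bot_lt_mul_inv hF).ne'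
  exact s.star_le_star_of_star_mul_le (hP F hF hFfg) hF hFinv hA hB h
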